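/- Let Σ be a real symmetric positive definite 2n×2n matrix (n = n_A + n_B, n_B ≥ n_A), ħ > 0, and M = (ħ/2)Σ⁻¹ with blocks M_AA, M_AB, M_BA = M_ABᵀ, M_BB. Let M_AB = U D Vᵀ be a singular value decomposition (U, V real orthogonal, D the 2n_A×2n_B matrix with D_{jj} = μ_j ≥ 0 and all other entries zero), let ε_1,…,ε_{2n_A} > 0, and set M̃_AA^ε = M_AA + U·diag(ε_j μ_j)·Uᵀ and M̃_BB^{1/ε} = M_BB + V·diag(μ_1/ε_1,…,μ_{2n_A}/ε_{2n_A}, 0,…,0)·Vᵀ. If every complex eigenvalue of J_{n_A}·M̃_AA^ε has modulus ≤ 1 and every complex eigenvalue of J_{n_B}·M̃_BB^{1/ε} has modulus ≤ 1 (i.e., all symplectic eigenvalues of M̃_AA^ε and of M̃_BB^{1/ε} are ≤ 1), then the Werner–Wolf separability condition holds for Σ: there exist real symmetric Σ_A, Σ_B with Σ_A + (iħ/2)J_{n_A} ≥ 0, Σ_B + (iħ/2)J_{n_B} ≥ 0, and Σ − (Σ_A ⊕ Σ_B) positive semidefinite; hence the Gaussian state with covariance matrix Σ is separable. -/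

import Mathlib

open Matrix
open scoped ComplexOrder

noncomputable section

/-- The standard symplectic matrix `J_m = [[0, I_m], [-I_m, 0]]` on `ℝ^{2m}`,
indexed by `Fin (2m)`. -/
def symplJ' (m : ℕ) : Matrix (Fin (2*m)) (Fin (2*m)) ℝ :=
  Matrix.of fun i j =>
    if (j : ℕ) = (i : ℕ) + m then 1 else if (i : ℕ) = (j : ℕ) + m then -1 else 0

/-- The quantum condition `Σ + (i·hbar/2) J_m ≥ 0`. -/
def QuantumCond' (m : ℕ) (hbar : ℝ) (Sig : Matrix (Fin (2*m)) (Fin (2*m)) ℝ) : Prop :=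
  (Sig.map Complex.ofReal + (hbar / 2 : ℝ) • Complex.I • (symplJ' m).map Complex.ofReal).PosSemidef

/-- `μ ∈ ℂ` is an eigenvalue of the real matrix `N` (viewed as a complex matrix). -/
def IsEigenvalue' {ι : Type} [Fintype ι] [DecidableEq ι] (N : Matrix ι ι ℝ) (μ : ℂ) : Prop :=
  (N.map Complex.ofReal - μ • 1).det = 0

/-- The Werner–Wolf separability condition for a covariance matrix on
`ℝ^{2n_A} ⊕ ℝ^{2n_B}`; it is necessary and sufficient for the separability of the Gaussian
state with covariance matrix `Σ`. -/
def WernerWolf' (nA nB : ℕ) (hbar : ℝ)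
    (Sig : Matrix (Fin (2*nA) ⊕ Fin (2*nB)) (Fin (2*nA) ⊕ Fin (2*nB)) ℝ) : Prop :=
  ∃ (SigA : Matrix (Fin (2*nA)) (Fin (2*nA)) ℝ) (SigB : Matrix (Fin (2*nB)) (Fin (2*nB)) ℝ),
    SigA.IsSymm ∧ SigB.IsSymm ∧
    QuantumCond' nA hbar SigA ∧ QuantumCond' nB hbar SigB ∧
    (Sig - Matrix.fromBlocks SigA 0 0 SigB).PosSemidef


set_option linter.unusedSectionVars false
set_option linter.unusedVariables false
set_option maxHeartbeats 1600000

namespace Stmt15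

open scoped MatrixOrder

variable {n : Type} [Fintype n] [DecidableEq n] {𝕜 : Type} [RCLike 𝕜]

lemma real_smul_eq (c : ℝ) (A : Matrix n n 𝕜) : c • A = (c : 𝕜) • A := by
  ext i j
  simp [Matrix.smul_apply, RCLike.real_smul_eq_coe_smul (K := 𝕜)]

lemma posSemidef_real_smul {c : ℝ} (hc : 0 ≤ c) {A : Matrix n n 𝕜} (hA : A.PosSemidef) :
    (c • A).PosSemidef := by
  rw [real_smul_eq]
  refine PosSemidef.of_dotProduct_mulVec_nonneg ?_ ?_
  · rw [Matrix.IsHermitian, conjTranspose_smul, hA.1.eq, RCLike.star_def, RCLike.conj_ofReal]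
  · intro x
    rw [smul_mulVec, dotProduct_smul, smul_eq_mul]
    exact mul_nonneg (RCLike.ofReal_nonneg.2 hc) (hA.dotProduct_mulVec_nonneg x)

lemma posDef_real_smul {c : ℝ} (hc : 0 < c) {A : Matrix n n 𝕜} (hA : A.PosDef) :
    (c • A).PosDef := by
  rw [real_smul_eq]
  refine PosDef.of_dotProduct_mulVec_pos ?_ ?_
  · rw [Matrix.IsHermitian, conjTranspose_smul, hA.1.eq, RCLike.star_def, RCLike.conj_ofReal]
  · intro x hx
    rw [smul_mulVec, dotProduct_smul, smul_eq_mul]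
    exact mul_pos (RCLike.ofReal_pos.2 hc) (hA.dotProduct_mulVec_pos hx)

lemma map_conjT (A : Matrix n n ℝ) :
    (Aᴴ).map Complex.ofReal = (A.map Complex.ofReal)ᴴ := by
  ext i j
  simp [conjTranspose_apply, Complex.conj_ofReal]

lemma map_mul' (A B : Matrix n n ℝ) :
    (A * B).map Complex.ofReal = A.map Complex.ofReal * B.map Complex.ofReal :=
  Matrix.map_mul (f := Complex.ofRealHom)

lemma map_one' : ((1 : Matrix n n ℝ)).map Complex.ofReal = 1 := by
  ext i j
  simp [Matrix.one_apply, apply_ite]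

lemma map_inv' (A : Matrix n n ℝ) (hA : IsUnit A.det) :
    (A⁻¹).map Complex.ofReal = (A.map Complex.ofReal)⁻¹ := by
  symm
  apply Matrix.inv_eq_left_inv
  rw [← map_mul', Matrix.nonsing_inv_mul _ hA, map_one']

lemma posSemidef_map {A : Matrix n n ℝ} (hA : A.PosSemidef) :
    (A.map Complex.ofReal).PosSemidef := by
  obtain ⟨B, hB⟩ : ∃ B : Matrix n n ℝ, A = Bᴴ * B :=
    ⟨CFC.sqrt A, by rw [(CFC.sqrt_nonneg A).posSemidef.1.eq, CFC.sqrt_mul_sqrt_self A hA.nonneg]⟩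
  rw [hB, map_mul', map_conjT]
  exact posSemidef_conjTranspose_mul_self _

lemma posDef_map {A : Matrix n n ℝ} (hA : A.PosDef) :
    (A.map Complex.ofReal).PosDef := by
  have hpsd := posSemidef_map hA.posSemidef
  refine PosDef.of_dotProduct_mulVec_pos hpsd.1 (fun x hx => ?_)
  rcases (hpsd.dotProduct_mulVec_nonneg x).lt_or_eq with h | h
  · exact h
  · exfalso
    apply hx
    have h0 : (A.map Complex.ofReal) *ᵥ x = 0 := (hpsd.dotProduct_mulVec_zero_iff x).1 h.symm
    have hdet : (A.map Complex.ofReal).det ≠ 0 := by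
      have hd2 : (A.map Complex.ofReal).det = (A.det : ℂ) :=
        (RingHom.map_det Complex.ofRealHom A).symm
      rw [hd2]
      simpa using hA.det_pos.ne'
    have hinj := Matrix.mulVec_injective_iff_isUnit.mpr
      ((Matrix.isUnit_iff_isUnit_det _).mpr (isUnit_iff_ne_zero.mpr hdet))
    exact hinj (by simp [h0])


lemma unitary_conj_psd {U : Matrix n n 𝕜} (hU : U ∈ Matrix.unitaryGroup n 𝕜)
    {d : n → ℝ} (hd : ∀ i, 0 ≤ d i) :
    (U * Matrix.diagonal (fun i => (d i : 𝕜)) * star U).PosSemidef := by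
  rw [Matrix.star_eq_conjTranspose]
  exact (posSemidef_diagonal_iff.mpr fun i =>
    RCLike.ofReal_nonneg.2 (hd i)).mul_mul_conjTranspose_same U

lemma one_add_psd {H : Matrix n n 𝕜} (hH : H.IsHermitian)
    (h : ∀ i, -1 ≤ hH.eigenvalues i) : (1 + H).PosSemidef := by
  have hUmem := (hH.eigenvectorUnitary).2
  have hUU : (hH.eigenvectorUnitary : Matrix n n 𝕜) *
      star (hH.eigenvectorUnitary : Matrix n n 𝕜) = 1 :=
    (Matrix.mem_unitaryGroup_iff).mp hUmem
  have key : 1 + H = (hH.eigenvectorUnitary : Matrix n n 𝕜) *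
      Matrix.diagonal (fun i => ((1 + hH.eigenvalues i : ℝ) : 𝕜)) *
      star (hH.eigenvectorUnitary : Matrix n n 𝕜) := by
    have hdiag : Matrix.diagonal (fun i => ((1 + hH.eigenvalues i : ℝ) : 𝕜)) =
        1 + Matrix.diagonal (RCLike.ofReal ∘ hH.eigenvalues) := by
      ext i j
      rcases eq_or_ne i j with rfl | hne
      · simp
      · simp [Matrix.diagonal_apply_ne _ hne, Matrix.one_apply_ne hne]
    rw [hdiag, mul_add, add_mul, mul_one, hUU]
    congr 1
    exact hH.spectral_theorem
  rw [key]
  exact unitary_conj_psd hUmem (fun i => by linarith [h i])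

lemma det_sub_eigenvalue {H : Matrix n n 𝕜} (hH : H.IsHermitian) (i : n) :
    (H - (hH.eigenvalues i : 𝕜) • 1).det = 0 := by
  apply Matrix.exists_mulVec_eq_zero_iff.mp
  refine ⟨⇑(hH.eigenvectorBasis i), ?_, ?_⟩
  · intro hzero
    apply hH.eigenvectorBasis.orthonormal.ne_zero i
    ext j
    exact congrFun hzero j
  · rw [Matrix.sub_mulVec, Matrix.smul_mulVec, Matrix.one_mulVec,
      hH.mulVec_eigenvectorBasis, RCLike.real_smul_eq_coe_smul (K := 𝕜), sub_self]

lemma eigenvalues_le_one {C : Matrix n n 𝕜} (hC : C.IsHermitian)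
    (h1 : (1 - C).PosSemidef) (i : n) : hC.eigenvalues i ≤ 1 := by
  set v : n → 𝕜 := ⇑(hC.eigenvectorBasis i) with hv
  have hvne : v ≠ 0 := by
    intro hzero
    apply hC.eigenvectorBasis.orthonormal.ne_zero i
    ext j
    exact congrFun hzero j
  have hCv : C *ᵥ v = hC.eigenvalues i • v := hC.mulVec_eigenvectorBasis i
  have h := h1.dotProduct_mulVec_nonneg v
  rw [Matrix.sub_mulVec, Matrix.one_mulVec, dotProduct_sub, hCv, dotProduct_smul] at h
  have hre : (0:ℝ) ≤ RCLike.re (star v ⬝ᵥ v - hC.eigenvalues i • (star v ⬝ᵥ v)) :=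
    (RCLike.nonneg_iff.mp h).1
  rw [map_sub, RCLike.smul_re] at hre
  have hapos : (0:ℝ) < RCLike.re (star v ⬝ᵥ v) := by
    have := dotProduct_star_self_pos_iff.mpr hvne
    exact (RCLike.pos_iff.mp this).1
  nlinarith

lemma conj_diag_inv {U : Matrix n n 𝕜} (hUU : U * star U = 1) (hUU' : star U * U = 1)
    {f : n → ℝ} (hf : ∀ j, f j ≠ 0) :
    (U * Matrix.diagonal (fun j => (f j : 𝕜)) * star U)⁻¹ =
      U * Matrix.diagonal (fun j => (((f j)⁻¹ : ℝ) : 𝕜)) * star U := by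
  apply Matrix.inv_eq_left_inv
  have step : (U * Matrix.diagonal (fun j => (((f j)⁻¹ : ℝ) : 𝕜)) * star U) *
      (U * Matrix.diagonal (fun j => (f j : 𝕜)) * star U) =
      U * (Matrix.diagonal (fun j => (((f j)⁻¹ : ℝ) : 𝕜)) *
        ((star U * U) * Matrix.diagonal (fun j => (f j : 𝕜)))) * star U := by
    simp only [Matrix.mul_assoc]
  rw [step, hUU', Matrix.one_mul, Matrix.diagonal_mul_diagonal]
  have hone : (fun j => (((f j)⁻¹ : ℝ) : 𝕜) * ((f j : ℝ) : 𝕜)) = fun _ => (1 : 𝕜) := by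
    funext j
    rw [← RCLike.ofReal_mul, inv_mul_cancel₀ (hf j)]
    simp
  rw [hone, Matrix.diagonal_one, Matrix.mul_one, hUU]

lemma inv_sub_one_psd {C : Matrix n n 𝕜} (hC : C.PosDef) (h1 : (1 - C).PosSemidef) :
    (C⁻¹ - 1).PosSemidef := by
  have hUmem := (hC.1.eigenvectorUnitary).2
  set U : Matrix n n 𝕜 := (hC.1.eigenvectorUnitary : Matrix n n 𝕜) with hUdef
  have hUU : U * star U = 1 := (Matrix.mem_unitaryGroup_iff).mp hUmem
  have hUU' : star U * U = 1 := (Matrix.mem_unitaryGroup_iff').mp hUmem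
  have hpos : ∀ j, 0 < hC.1.eigenvalues j := hC.eigenvalues_pos
  have hspec : C = U * Matrix.diagonal (fun j => ((hC.1.eigenvalues j : ℝ) : 𝕜)) * star U :=
    hC.1.spectral_theorem
  have hinv : C⁻¹ = U * Matrix.diagonal (fun j => (((hC.1.eigenvalues j)⁻¹ : ℝ) : 𝕜)) * star U := by
    rw [congrArg Inv.inv hspec]
    exact conj_diag_inv hUU hUU' (fun j => (hpos j).ne')
  have hdiag : Matrix.diagonal (fun j => (((hC.1.eigenvalues j)⁻¹ - 1 : ℝ) : 𝕜)) =
      Matrix.diagonal (fun j => (((hC.1.eigenvalues j)⁻¹ : ℝ) : 𝕜)) - 1 := by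
    ext i j
    rcases eq_or_ne i j with rfl | hne
    · simp
    · simp [Matrix.diagonal_apply_ne _ hne, Matrix.one_apply_ne hne]
  have key : C⁻¹ - 1 =
      U * Matrix.diagonal (fun j => (((hC.1.eigenvalues j)⁻¹ - 1 : ℝ) : 𝕜)) * star U := by
    rw [hdiag, mul_sub, sub_mul, mul_one, hUU, hinv]
  rw [key]
  refine unitary_conj_psd hUmem (fun j => ?_)
  have hle := eigenvalues_le_one hC.1 h1 j
  have hp := hpos j
  have hinvc := mul_inv_cancel₀ hp.ne'
  have hnn : 0 ≤ (hC.1.eigenvalues j)⁻¹ := inv_nonneg.mpr hp.le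
  nlinarith

lemma inv_antitone {A B : Matrix n n 𝕜} (hA : A.PosDef) (hB : B.PosDef)
    (hAB : (B - A).PosSemidef) : (A⁻¹ - B⁻¹).PosSemidef := by
  set S := CFC.sqrt B with hSdef
  have hS : S.PosSemidef := (CFC.sqrt_nonneg B).posSemidef
  have hSS : S * S = B := CFC.sqrt_mul_sqrt_self B hB.posSemidef.nonneg
  have hdetS : IsUnit S.det := by
    refine isUnit_iff_ne_zero.mpr fun h => ?_
    have : S.det * S.det = B.det := by rw [← Matrix.det_mul, hSS]
    rw [h, zero_mul] at this
    exact hB.det_pos.ne' this.symm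
  have hS1 : S * S⁻¹ = 1 := Matrix.mul_nonsing_inv _ hdetS
  have hS2 : S⁻¹ * S = 1 := Matrix.nonsing_inv_mul _ hdetS
  have hSinvH : (S⁻¹).IsHermitian := hS.1.inv
  have hBinv : B⁻¹ = S⁻¹ * S⁻¹ := by rw [← hSS, Matrix.mul_inv_rev]
  set C := S⁻¹ * A * S⁻¹ with hCdef
  have hCherm : C.IsHermitian := by
    rw [Matrix.IsHermitian, hCdef, Matrix.conjTranspose_mul, Matrix.conjTranspose_mul,
      hSinvH.eq, hA.1.eq, Matrix.mul_assoc]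
  have hCpd : C.PosDef := by
    refine PosDef.of_dotProduct_mulVec_pos hCherm (fun x hx => ?_)
    have hx' : S⁻¹ *ᵥ x ≠ 0 := by
      intro h
      apply hx
      have hxx : S *ᵥ (S⁻¹ *ᵥ x) = x := by rw [Matrix.mulVec_mulVec, hS1, Matrix.one_mulVec]
      rw [h, Matrix.mulVec_zero] at hxx
      exact hxx.symm
    have hq := hA.dotProduct_mulVec_pos hx'
    have hrw : star x ⬝ᵥ (C *ᵥ x) = star (S⁻¹ *ᵥ x) ⬝ᵥ (A *ᵥ (S⁻¹ *ᵥ x)) := by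
      rw [hCdef, ← Matrix.mulVec_mulVec, ← Matrix.mulVec_mulVec,
        Matrix.star_mulVec, hSinvH.eq, Matrix.dotProduct_mulVec (star x)]
    rw [hrw]
    exact hq
  have h1C : (1 - C).PosSemidef := by
    have hBc : S⁻¹ * B * S⁻¹ = 1 := by
      rw [← hSS, ← Matrix.mul_assoc, hS2, Matrix.one_mul, hS1]
    have hrw : 1 - C = S⁻¹ * (B - A) * (S⁻¹)ᴴ := by
      rw [hSinvH.eq, Matrix.mul_sub, Matrix.sub_mul, hBc, hCdef]
    rw [hrw]
    exact hAB.mul_mul_conjTranspose_same _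
  have hCi : (C⁻¹ - 1).PosSemidef := inv_sub_one_psd hCpd h1C
  have hCinv : C⁻¹ = S * A⁻¹ * S := by
    rw [hCdef, Matrix.mul_inv_rev, Matrix.mul_inv_rev,
      Matrix.nonsing_inv_nonsing_inv _ hdetS, ← Matrix.mul_assoc]
  have key : A⁻¹ - B⁻¹ = S⁻¹ * (C⁻¹ - 1) * (S⁻¹)ᴴ := by
    rw [hSinvH.eq, Matrix.mul_sub, Matrix.sub_mul, Matrix.mul_one, hCinv, hBinv]
    congr 1
    rw [← Matrix.mul_assoc, ← Matrix.mul_assoc, hS2, Matrix.one_mul, Matrix.mul_assoc, hS1,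
      Matrix.mul_one]
  rw [key]
  exact hCi.mul_mul_conjTranspose_same _


lemma core_complex {Nc Jc : Matrix n n ℂ} (hN : Nc.PosDef) (hJ : Jcᴴ = -Jc)
    (h : ∀ ν : ℂ, (Jc * Nc - ν • 1).det = 0 → ‖ν‖ ≤ 1) :
    (Nc⁻¹ + Complex.I • Jc).PosSemidef := by
  set S := CFC.sqrt Nc with hSdef
  have hS : S.PosSemidef := (CFC.sqrt_nonneg Nc).posSemidef
  have hSS : S * S = Nc := CFC.sqrt_mul_sqrt_self Nc hN.posSemidef.nonneg
  have hdetS : S.det ≠ 0 := by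
    intro h0
    have : S.det * S.det = Nc.det := by rw [← Matrix.det_mul, hSS]
    rw [h0, zero_mul] at this
    exact hN.det_pos.ne' this.symm
  have hdetSu : IsUnit S.det := isUnit_iff_ne_zero.mpr hdetS
  have hS1 : S * S⁻¹ = 1 := Matrix.mul_nonsing_inv _ hdetSu
  have hS2 : S⁻¹ * S = 1 := Matrix.nonsing_inv_mul _ hdetSu
  have hSinvH : (S⁻¹).IsHermitian := hS.1.inv
  have hNinv : Nc⁻¹ = S⁻¹ * S⁻¹ := by rw [← hSS, Matrix.mul_inv_rev]
  set H := Complex.I • (S * Jc * S) with hHdef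
  have hHherm : H.IsHermitian := by
    rw [Matrix.IsHermitian, hHdef, Matrix.conjTranspose_smul, Matrix.conjTranspose_mul,
      Matrix.conjTranspose_mul, hJ, hS.1.eq]
    simp [Matrix.mul_assoc, Matrix.mul_neg, Matrix.neg_mul, Complex.star_def, Complex.conj_I]
  have heig : ∀ i, -1 ≤ hHherm.eigenvalues i := by
    intro i
    set lam := hHherm.eigenvalues i with hlam
    have hdet0 : (H - (lam : ℂ) • 1).det = 0 := det_sub_eigenvalue hHherm i
    set ν : ℂ := -Complex.I * lam with hν
    have hsc : Complex.I * ν = (lam : ℂ) := by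
      rw [hν, show -Complex.I * (lam:ℂ) = -(Complex.I * lam) by ring, mul_neg, ← mul_assoc,
        Complex.I_mul_I]
      ring
    have hfac : H - (lam : ℂ) • 1 = Complex.I • (S * Jc * S - ν • (1 : Matrix n n ℂ)) := by
      rw [smul_sub, smul_smul, hsc, hHdef]
    have hdet1 : (S * Jc * S - ν • (1 : Matrix n n ℂ)).det = 0 := by
      have := hdet0
      rw [hfac, Matrix.det_smul] at this
      rcases mul_eq_zero.mp this with h' | h'
      · exact absurd h' (pow_ne_zero _ Complex.I_ne_zero)
      · exact h'
    have hconj : S * Jc * S - ν • (1 : Matrix n n ℂ) = S * (Jc * Nc - ν • 1) * S⁻¹ := by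
      rw [Matrix.mul_sub, Matrix.sub_mul]
      congr 1
      · rw [← hSS]
        rw [show S * (Jc * (S * S)) * S⁻¹ = S * Jc * S * (S * S⁻¹) by
          simp only [Matrix.mul_assoc], hS1, Matrix.mul_one]
      · rw [Matrix.mul_smul, Matrix.mul_one, Matrix.smul_mul, hS1]
    have hdet2 : (Jc * Nc - ν • 1).det = 0 := by
      have hd := hdet1
      rw [hconj, Matrix.det_mul, Matrix.det_mul] at hd
      have hdetSi : S⁻¹.det ≠ 0 := by
        intro h0
        have : S.det * S⁻¹.det = 1 := by rw [← Matrix.det_mul, hS1, Matrix.det_one]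
        rw [h0, mul_zero] at this
        exact zero_ne_one this
      rcases mul_eq_zero.mp hd with h' | h'
      · rcases mul_eq_zero.mp h' with h'' | h''
        · exact absurd h'' hdetS
        · exact h''
      · exact absurd h' hdetSi
    have habs := h ν hdet2
    have : ‖ν‖ = |lam| := by
      rw [hν, norm_mul, norm_neg, Complex.norm_I, one_mul, Complex.norm_real, Real.norm_eq_abs]
    rw [this] at habs
    have := abs_le.mp habs
    linarith [this.1]
  have h1H : (1 + H).PosSemidef := one_add_psd hHherm heig
  have key : Nc⁻¹ + Complex.I • Jc = S⁻¹ * (1 + H) * (S⁻¹)ᴴ := by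
    rw [hSinvH.eq, Matrix.mul_add, Matrix.add_mul, Matrix.mul_one, hNinv, hHdef]
    congr 1
    rw [Matrix.mul_smul, Matrix.smul_mul]
    congr 1
    rw [show S⁻¹ * (S * Jc * S) * S⁻¹ = (S⁻¹ * S) * Jc * (S * S⁻¹) by
      simp only [Matrix.mul_assoc], hS1, hS2, Matrix.one_mul, Matrix.mul_one]
  rw [key]
  exact h1H.mul_mul_conjTranspose_same _

lemma posDef_fromBlocks_left {p q : Type} [Fintype p] [DecidableEq p] [Fintype q] [DecidableEq q]
    {A : Matrix p p ℝ} {B : Matrix q q ℝ} (h : (Matrix.fromBlocks A 0 0 B).PosDef) :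
    A.PosDef := by
  refine PosDef.of_dotProduct_mulVec_pos ?_ ?_
  · have h1 := h.1
    rw [Matrix.IsHermitian, Matrix.fromBlocks_conjTranspose] at h1
    have h2 := congrArg Matrix.toBlocks₁₁ h1
    simpa [Matrix.toBlocks_fromBlocks₁₁, Matrix.IsSymm] using h2
  · intro x hx
    have hy : (Sum.elim x (0 : q → ℝ)) ≠ 0 := by
      intro h0
      apply hx
      funext i
      exact congrFun h0 (Sum.inl i)
    have hq := h.dotProduct_mulVec_pos hy
    have hst : star (Sum.elim x (0 : q → ℝ)) = Sum.elim x (0 : q → ℝ) := by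
      funext i
      cases i <;> simp
    rw [hst, Matrix.fromBlocks_mulVec] at hq
    simpa [sumElim_dotProduct_sumElim] using hq

lemma posDef_fromBlocks_right {p q : Type} [Fintype p] [DecidableEq p] [Fintype q] [DecidableEq q]
    {A : Matrix p p ℝ} {B : Matrix q q ℝ} (h : (Matrix.fromBlocks A 0 0 B).PosDef) :
    B.PosDef := by
  refine PosDef.of_dotProduct_mulVec_pos ?_ ?_
  · have h1 := h.1
    rw [Matrix.IsHermitian, Matrix.fromBlocks_conjTranspose] at h1
    have h2 := congrArg Matrix.toBlocks₂₂ h1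
    simpa [Matrix.toBlocks_fromBlocks₂₂, Matrix.IsSymm] using h2
  · intro x hx
    have hy : (Sum.elim (0 : p → ℝ) x) ≠ 0 := by
      intro h0
      apply hx
      funext i
      exact congrFun h0 (Sum.inr i)
    have hq := h.dotProduct_mulVec_pos hy
    have hst : star (Sum.elim (0 : p → ℝ) x) = Sum.elim (0 : p → ℝ) x := by
      funext i
      cases i <;> simp
    rw [hst, Matrix.fromBlocks_mulVec] at hq
    simpa [sumElim_dotProduct_sumElim] using hq


lemma symplJ_transpose (m : ℕ) (hm : 1 ≤ m) : (symplJ' m)ᵀ = -(symplJ' m) := by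
  ext i j
  have hi := i.isLt
  have hj := j.isLt
  simp only [Matrix.transpose_apply, symplJ', Matrix.neg_apply, Matrix.of_apply]
  split_ifs <;> first | omega | norm_num

lemma quantum_of_inv {m : ℕ} (hm : 1 ≤ m) {hbar : ℝ} (hhb : 0 < hbar)
    {N : Matrix (Fin (2*m)) (Fin (2*m)) ℝ} (hN : N.PosDef)
    (h : ∀ ν : ℂ, IsEigenvalue' (symplJ' m * N) ν → ‖ν‖ ≤ 1) :
    QuantumCond' m hbar ((hbar/2) • N⁻¹) := by
  have hNc : (N.map Complex.ofReal).PosDef := posDef_map hN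
  have hJt : (symplJ' m)ᵀ = -(symplJ' m) := symplJ_transpose m hm
  have hJc : ((symplJ' m).map Complex.ofReal)ᴴ = -((symplJ' m).map Complex.ofReal) := by
    have h1 : ((symplJ' m)ᴴ).map Complex.ofReal = ((symplJ' m).map Complex.ofReal)ᴴ := map_conjT _
    rw [← h1]
    have h2 : (symplJ' m)ᴴ = (symplJ' m)ᵀ := by
      ext i j
      simp [Matrix.conjTranspose_apply]
    rw [h2, hJt]
    ext i j
    simp [Matrix.map_apply]
  have hdetN : IsUnit N.det := isUnit_iff_ne_zero.mpr hN.det_pos.ne'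
  have hcore := core_complex hNc hJc (fun ν hdet => h ν (by
    show (((symplJ' m * N).map Complex.ofReal) - ν • 1).det = 0
    rw [map_mul']
    exact hdet))
  unfold QuantumCond'
  have hmapsmul : (((hbar/2) • N⁻¹).map Complex.ofReal) =
      (hbar/2 : ℝ) • ((N⁻¹).map Complex.ofReal) := by
    ext i j
    simp [Matrix.map_apply, Matrix.smul_apply, Complex.ofReal_mul, Complex.real_smul]
  rw [hmapsmul, map_inv' N hdetN, ← smul_add]
  exact posSemidef_real_smul (half_pos hhb).le hcore

lemma fromBlocks_diag_inv {p q : Type} [Fintype p] [DecidableEq p] [Fintype q] [DecidableEq q]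
    {A : Matrix p p ℝ} {B : Matrix q q ℝ} (hA : IsUnit A.det) (hB : IsUnit B.det) :
    (Matrix.fromBlocks A 0 0 B)⁻¹ = Matrix.fromBlocks A⁻¹ 0 0 B⁻¹ := by
  apply Matrix.inv_eq_left_inv
  rw [Matrix.fromBlocks_multiply]
  simp only [Matrix.mul_zero, Matrix.zero_mul, add_zero, zero_add,
    Matrix.nonsing_inv_mul _ hA, Matrix.nonsing_inv_mul _ hB]
  exact Matrix.fromBlocks_one

lemma herm_real_isSymm {ι : Type} [Fintype ι] {A : Matrix ι ι ℝ} (h : A.IsHermitian) :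
    A.IsSymm := by
  ext i j
  have hh := congrFun (congrFun h i) j
  simpa [Matrix.conjTranspose_apply] using hh

lemma C0_psd (nA nB : ℕ) (hAB : nA ≤ nB) (μ : Fin (2*nA) → ℝ) (hμ : ∀ j, 0 ≤ μ j)
    (ε : Fin (2*nA) → ℝ) (hε : ∀ j, 0 < ε j)
    (D : Matrix (Fin (2*nA)) (Fin (2*nB)) ℝ)
    (hD : ∀ i j, D i j = if (i : ℕ) = (j : ℕ) then μ i else 0) :
    (Matrix.fromBlocks (Matrix.diagonal (fun j => ε j * μ j)) (-D) (-Dᵀ)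
      (Matrix.diagonal (fun j : Fin (2*nB) =>
        if hj : (j : ℕ) < 2*nA then μ ⟨j, hj⟩ / ε ⟨j, hj⟩ else 0))).PosSemidef := by
  set L : Matrix (Fin (2*nA)) (Fin (2*nA) ⊕ Fin (2*nB)) ℝ := Matrix.of fun j k =>
    Sum.elim (fun a : Fin (2*nA) => if a = j then Real.sqrt (ε j * μ j) else 0)
      (fun b : Fin (2*nB) => if (b : ℕ) = (j : ℕ) then -Real.sqrt (μ j / ε j) else 0) k with hL
  have hsqrtmu : ∀ a, Real.sqrt (ε a * μ a) * Real.sqrt (μ a / ε a) = μ a := by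
    intro a
    rw [← Real.sqrt_mul (mul_nonneg (hε a).le (hμ a))]
    have harg : (ε a * μ a) * (μ a / ε a) = μ a ^ 2 := by
      have h0 := (hε a).ne'
      field_simp
    rw [harg, Real.sqrt_sq (hμ a)]
  have key : Matrix.fromBlocks (Matrix.diagonal (fun j => ε j * μ j)) (-D) (-Dᵀ)
      (Matrix.diagonal (fun j : Fin (2*nB) =>
        if hj : (j : ℕ) < 2*nA then μ ⟨j, hj⟩ / ε ⟨j, hj⟩ else 0)) = Lᴴ * L := by
    ext k k'
    rw [Matrix.mul_apply]
    rcases k with a | b <;> rcases k' with a' | b'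
    · -- inl inl
      simp only [Matrix.conjTranspose_apply, star_trivial, hL, Matrix.of_apply, Sum.elim_inl,
        Matrix.fromBlocks_apply₁₁]
      rw [Finset.sum_eq_single a
        (fun j _ hj => by rw [if_neg (fun hh => hj hh.symm), zero_mul])
        (fun habs => absurd (Finset.mem_univ a) habs)]
      rcases eq_or_ne a a' with rfl | h
      · rw [if_pos rfl, Matrix.diagonal_apply_eq,
          Real.mul_self_sqrt (mul_nonneg (hε a).le (hμ a))]
      · rw [Matrix.diagonal_apply_ne _ h, if_pos rfl, if_neg (Ne.symm h), mul_zero]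
    · -- inl inr
      simp only [Matrix.conjTranspose_apply, star_trivial, hL, Matrix.of_apply, Sum.elim_inl, Sum.elim_inr,
        Matrix.fromBlocks_apply₁₂, Matrix.neg_apply]
      rw [Finset.sum_eq_single a
        (fun j _ hj => by rw [if_neg (fun hh => hj hh.symm), zero_mul])
        (fun habs => absurd (Finset.mem_univ a) habs)]
      rw [if_pos rfl, hD]
      rcases eq_or_ne ((a : ℕ)) ((b' : ℕ)) with h | h
      · rw [if_pos h, if_pos h.symm, mul_neg, hsqrtmu]
      · rw [if_neg h, if_neg (fun hh => h hh.symm), mul_zero, neg_zero]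
    · -- inr inl
      simp only [Matrix.conjTranspose_apply, star_trivial, hL, Matrix.of_apply, Sum.elim_inl, Sum.elim_inr,
        Matrix.fromBlocks_apply₂₁, Matrix.neg_apply, Matrix.transpose_apply]
      rw [Finset.sum_eq_single a'
        (fun j _ hj => by
          have h2 : a' ≠ j := fun hh => hj hh.symm
          simp [h2])
        (fun habs => absurd (Finset.mem_univ a') habs)]
      rw [if_pos rfl, hD]
      rcases eq_or_ne ((a' : ℕ)) ((b : ℕ)) with h | h
      · rw [if_pos h, if_pos h.symm, neg_mul, mul_comm, hsqrtmu]
      · rw [if_neg h, if_neg (fun hh => h hh.symm), zero_mul, neg_zero]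
    · -- inr inr
      simp only [Matrix.conjTranspose_apply, star_trivial, hL, Matrix.of_apply, Sum.elim_inr,
        Matrix.fromBlocks_apply₂₂]
      by_cases hb : (b : ℕ) < 2*nA
      · rw [Finset.sum_eq_single (⟨(b : ℕ), hb⟩ : Fin (2*nA))
          (fun j _ hj => by rw [if_neg (fun hh => hj (Fin.ext hh.symm)), zero_mul])
          (fun habs => absurd (Finset.mem_univ _) habs)]
        rw [if_pos rfl]
        rcases eq_or_ne b b' with rfl | h
        · rw [Matrix.diagonal_apply_eq, if_pos rfl, dif_pos hb, neg_mul_neg,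
            Real.mul_self_sqrt (div_nonneg (hμ _) (hε _).le)]
        · rw [Matrix.diagonal_apply_ne _ h, if_neg (fun hh => h (Fin.ext hh.symm)), mul_zero]
      · rw [Finset.sum_eq_zero (fun j _ => by
          have hj2 := j.isLt
          rw [if_neg (by omega), zero_mul])]
        rcases eq_or_ne b b' with rfl | h
        · rw [Matrix.diagonal_apply_eq, dif_neg hb]
        · rw [Matrix.diagonal_apply_ne _ h]
  rw [key]
  exact Matrix.posSemidef_conjTranspose_mul_self L


end Stmt15

/-- third separability criterion: with `M = (hbar/2)Σ⁻¹` written in blocks,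
`M_AB = U D Vᵀ` a singular value decomposition, and `ε_j > 0`, set
`M̃_AA^ε = M_AA + U diag(ε_j μ_j) Uᵀ` and
`M̃_BB^{1/ε} = M_BB + V diag(μ_1/ε_1, …, μ_{2n_A}/ε_{2n_A}, 0, …, 0) Vᵀ`.
If all symplectic eigenvalues of `M̃_AA^ε` and `M̃_BB^{1/ε}` are `≤ 1` (i.e. all complex
eigenvalues of `J·M̃_AA^ε` and `J·M̃_BB^{1/ε}` have modulus `≤ 1`), then the Werner–Wolf
separability condition holds for `Σ`, hence the Gaussian state with covariance matrix `Σ`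
is separable. -/
theorem statement15 (nA nB : ℕ) (hA : 1 ≤ nA) (hAB : nA ≤ nB) (hbar : ℝ) (hhb : 0 < hbar)
    (Sig : Matrix (Fin (2*nA) ⊕ Fin (2*nB)) (Fin (2*nA) ⊕ Fin (2*nB)) ℝ)
    (hsym : Sig.IsSymm) (hpos : Sig.PosDef)
    (U : Matrix (Fin (2*nA)) (Fin (2*nA)) ℝ) (hU : Uᵀ * U = 1)
    (V : Matrix (Fin (2*nB)) (Fin (2*nB)) ℝ) (hV : Vᵀ * V = 1)
    (μ : Fin (2*nA) → ℝ) (hμ : ∀ j, 0 ≤ μ j)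
    (D : Matrix (Fin (2*nA)) (Fin (2*nB)) ℝ)
    (hD : ∀ i j, D i j = if (i : ℕ) = (j : ℕ) then μ i else 0)
    (hSVD : ((hbar / 2) • Sig⁻¹).toBlocks₁₂ = U * D * Vᵀ)
    (ε : Fin (2*nA) → ℝ) (hε : ∀ j, 0 < ε j)
    (hAc : ∀ ν : ℂ, IsEigenvalue'
        (symplJ' nA * (((hbar / 2) • Sig⁻¹).toBlocks₁₁ +
          U * Matrix.diagonal (fun j => ε j * μ j) * Uᵀ)) ν → ‖ν‖ ≤ 1)
    (hBc : ∀ ν : ℂ, IsEigenvalue'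
        (symplJ' nB * (((hbar / 2) • Sig⁻¹).toBlocks₂₂ +
          V * Matrix.diagonal (fun j : Fin (2*nB) =>
            if hj : (j : ℕ) < 2*nA then μ ⟨j, hj⟩ / ε ⟨j, hj⟩ else 0) * Vᵀ)) ν →
        ‖ν‖ ≤ 1) :
    WernerWolf' nA nB hbar Sig := by
  classical
  set M : Matrix (Fin (2*nA) ⊕ Fin (2*nB)) (Fin (2*nA) ⊕ Fin (2*nB)) ℝ :=
    (hbar / 2) • Sig⁻¹ with hM
  set E : Matrix (Fin (2*nA)) (Fin (2*nA)) ℝ := Matrix.diagonal (fun j => ε j * μ j) with hE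
  set F : Matrix (Fin (2*nB)) (Fin (2*nB)) ℝ := Matrix.diagonal (fun j : Fin (2*nB) =>
    if hj : (j : ℕ) < 2*nA then μ ⟨j, hj⟩ / ε ⟨j, hj⟩ else 0) with hF
  set NA := M.toBlocks₁₁ + U * E * Uᵀ with hNA
  set NB := M.toBlocks₂₂ + V * F * Vᵀ with hNB
  have hSigdet : IsUnit Sig.det := isUnit_iff_ne_zero.mpr hpos.det_pos.ne'
  have hMpd : M.PosDef := Stmt15.posDef_real_smul (half_pos hhb) hpos.inv
  have hC0 : (Matrix.fromBlocks E (-D) (-Dᵀ) F).PosSemidef :=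
    Stmt15.C0_psd nA nB hAB μ hμ ε hε D hD
  have hCpsd : (Matrix.fromBlocks (U*E*Uᵀ) (-(U*D*Vᵀ)) (-(V*Dᵀ*Uᵀ)) (V*F*Vᵀ)).PosSemidef := by
    have h1 := hC0.mul_mul_conjTranspose_same (Matrix.fromBlocks U 0 0 V)
    have hWH : (Matrix.fromBlocks U 0 0 V)ᴴ = Matrix.fromBlocks Uᵀ 0 0 Vᵀ := by
      ext i j
      cases i <;> cases j <;>
        simp [Matrix.conjTranspose_apply, Matrix.transpose_apply]
    have heq : (Matrix.fromBlocks U 0 0 V) * (Matrix.fromBlocks E (-D) (-Dᵀ) F) *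
        (Matrix.fromBlocks U 0 0 V)ᴴ =
        Matrix.fromBlocks (U*E*Uᵀ) (-(U*D*Vᵀ)) (-(V*Dᵀ*Uᵀ)) (V*F*Vᵀ) := by
      rw [hWH, Matrix.fromBlocks_multiply, Matrix.fromBlocks_multiply]
      simp only [Matrix.mul_zero, Matrix.zero_mul, Matrix.mul_neg, Matrix.neg_mul,
        add_zero, zero_add, neg_zero]
    rw [heq] at h1
    exact h1
  have hsym21 : M.toBlocks₂₁ = (M.toBlocks₁₂)ᵀ := by
    ext i j
    have h := congrFun (congrFun hMpd.1 (Sum.inr i)) (Sum.inl j)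
    simpa [Matrix.conjTranspose_apply, Matrix.toBlocks₂₁, Matrix.toBlocks₁₂,
      Matrix.transpose_apply] using h.symm
  have hblocks : M + Matrix.fromBlocks (U*E*Uᵀ) (-(U*D*Vᵀ)) (-(V*Dᵀ*Uᵀ)) (V*F*Vᵀ) =
      Matrix.fromBlocks NA 0 0 NB := by
    conv_lhs => rw [← Matrix.fromBlocks_toBlocks M]
    rw [Matrix.fromBlocks_add, Matrix.fromBlocks_inj]
    refine ⟨rfl, ?_, ?_, rfl⟩
    · rw [hSVD, add_neg_cancel]
    · rw [hsym21, hSVD, Matrix.transpose_mul, Matrix.transpose_mul,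
        Matrix.transpose_transpose, ← Matrix.mul_assoc, add_neg_cancel]
  have hNpd : (Matrix.fromBlocks NA 0 0 NB).PosDef := by
    rw [← hblocks]
    exact hMpd.add_posSemidef hCpsd
  have hNApd := Stmt15.posDef_fromBlocks_left hNpd
  have hNBpd := Stmt15.posDef_fromBlocks_right hNpd
  have hNAdet : IsUnit NA.det := isUnit_iff_ne_zero.mpr hNApd.det_pos.ne'
  have hNBdet : IsUnit NB.det := isUnit_iff_ne_zero.mpr hNBpd.det_pos.ne'
  refine ⟨(hbar/2) • NA⁻¹, (hbar/2) • NB⁻¹, ?_, ?_, ?_, ?_, ?_⟩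
  · have h := Stmt15.herm_real_isSymm hNApd.1.inv
    rw [Matrix.IsSymm, Matrix.transpose_smul, h]
  · have h := Stmt15.herm_real_isSymm hNBpd.1.inv
    rw [Matrix.IsSymm, Matrix.transpose_smul, h]
  · exact Stmt15.quantum_of_inv hA hhb hNApd hAc
  · exact Stmt15.quantum_of_inv (le_trans hA hAB) hhb hNBpd hBc
  · have hdiff : (Matrix.fromBlocks NA 0 0 NB - M).PosSemidef := by
      rw [← hblocks, add_sub_cancel_left]
      exact hCpsd
    have hmono := Stmt15.inv_antitone hMpd hNpd hdiff
    have hMinv2 : M⁻¹ = (2/hbar) • Sig := by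
      apply Matrix.inv_eq_left_inv
      rw [hM, Matrix.smul_mul, Matrix.mul_smul, smul_smul,
        Matrix.mul_nonsing_inv _ hSigdet,
        show (2/hbar) * (hbar/2) = 1 by field_simp, one_smul]
    have hMinv : (hbar/2) • M⁻¹ = Sig := by
      rw [hMinv2, smul_smul, show (hbar/2) * (2/hbar) = 1 by field_simp, one_smul]
    have hfbinv : (Matrix.fromBlocks NA 0 0 NB)⁻¹ = Matrix.fromBlocks NA⁻¹ 0 0 NB⁻¹ :=
      Stmt15.fromBlocks_diag_inv hNAdet hNBdet
    have hgoal : Sig - Matrix.fromBlocks ((hbar/2) • NA⁻¹) 0 0 ((hbar/2) • NB⁻¹) =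
        (hbar/2) • (M⁻¹ - (Matrix.fromBlocks NA 0 0 NB)⁻¹) := by
      rw [smul_sub, hMinv, hfbinv]
      congr 1
      rw [Matrix.fromBlocks_smul, smul_zero, smul_zero]
    rw [hgoal]
    exact Stmt15.posSemidef_real_smul (half_pos hhb).le hmono
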